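/- arXiv:2206.09587 — 2 statements merged into one kernel-verified Lean document; each statement's English description precedes it below -/
import Mathlib

section
/- Let l ≥ 1, let v : Fin l → ℤ be a nonzero vector with greatest common divisor d > 0 of its entries, and write v = d • v' where v' is primitive. Then there exists an l × l integer matrix M, invertible over ℤ (det M = ±1), with first row equal to v', such that for every additive abelian group A the automorphism of Fin l → A induced by M (namely x ↦ (∑_j M_{ij} • x_j)_i) maps the subgroup {x : ∑_i v_i • x_i = 0} bijectively onto the subgroup {y : d • (y 0) = 0}. -/
/-!
Since `gcd v' = 1`, the functional `x ↦ ∑ i, v' i * x i` maps `ℤ^l` onto `ℤ`; its kernel is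
then a direct summand of rank `l - 1`, free because `ℤ` is a PID, so the functional is the first
coordinate of an automorphism of `ℤ^l`. The matrix `M` of that automorphism has first row `v'`
and acts invertibly on `A^l` for every abelian group `A`. As `v = d • v'`, we get
`∑ i, v i • x i = d • (M x) 0`, so the kernel of `x ↦ ∑ i, v i • x i` is the preimage under `M`
of `{y | d • y 0 = 0}`.
-/

universe u

open LinearMap Module in
theorem LinearMap.exists_linearEquiv_apply_zero_eq {R : Type*} [CommRing R] [IsDomain R]
    [IsPrincipalIdealRing R] {n : ℕ} (φ : (Fin (n + 1) → R) →ₗ[R] R)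
    (hφ : Function.Surjective φ) :
    ∃ e : (Fin (n + 1) → R) ≃ₗ[R] (Fin (n + 1) → R), ∀ x, e x 0 = φ x := by
  obtain ⟨s, hs⟩ := projective_lifting_property φ LinearMap.id hφ
  obtain ⟨e, -, he⟩ :=
    (exact_subtype_ker_map φ).splitSurjectiveEquiv (ker φ).injective_subtype ⟨s, hs⟩
  have hrank : finrank R (ker φ) = n := by
    have := e.finrank_eq
    rw [finrank_fin_fun, finrank_prod, finrank_self] at this
    omega
  let b := finBasisOfFinrankEq R (ker φ) hrank
  refine ⟨e ≪≫ₗ LinearEquiv.prodComm R _ R ≪≫ₗ (LinearEquiv.refl R R).prodCongr b.equivFun ≪≫ₗ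
    Fin.consLinearEquiv R (fun _ => R), fun x => ?_⟩
  exact (LinearMap.congr_fun he x).symm

theorem Matrix.exists_isUnit_det_and_apply_zero_eq {R : Type*} [CommRing R] [IsDomain R]
    [IsPrincipalIdealRing R] {n : ℕ} (w : Fin (n + 1) → R)
    (hw : Ideal.span (Set.range w) = ⊤) :
    ∃ M : Matrix (Fin (n + 1)) (Fin (n + 1)) R, IsUnit M.det ∧ M 0 = w := by
  obtain ⟨e, he⟩ := (Fintype.linearCombination R w).exists_linearEquiv_apply_zero_eq
    ((span_range_eq_top_iff_surjective_fintypeLinearCombination R w).1 hw)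
  refine ⟨LinearMap.toMatrix' e, ?_, ?_⟩
  · rw [LinearMap.det_toMatrix']
    exact LinearEquiv.isUnit_det' e
  · ext j
    rw [LinearMap.toMatrix'_apply, LinearEquiv.coe_coe, he,
      Fintype.linearCombination_apply_single, one_smul]

theorem Ideal.span_range_eq_top_of_gcd_eq_one {R ι : Type*} [CommRing R] [IsBezout R]
    [NormalizedGCDMonoid R] [Fintype ι] (w : ι → R) (hw : Finset.univ.gcd w = 1) :
    Ideal.span (Set.range w) = ⊤ := by
  obtain ⟨g, hg⟩ := Finset.gcd_eq_sum_mul Finset.univ w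
  rw [Ideal.eq_top_iff_one, ← hw, hg]
  exact Ideal.sum_mem _ fun i _ => Ideal.mul_mem_right _ _ (Ideal.subset_span ⟨i, rfl⟩)

namespace Matrix

variable {m n p R A : Type*} [Fintype n] [Fintype p]

def mulVecModule [Semiring R] [AddCommMonoid A] [Module R A] (M : Matrix m n R) (x : n → A) :
    m → A :=
  fun i => ∑ j, M i j • x j

theorem mulVecModule_mulVecModule [Semiring R] [AddCommMonoid A] [Module R A]
    (M : Matrix m n R) (N : Matrix n p R) (x : p → A) :
    M.mulVecModule (N.mulVecModule x) = (M * N).mulVecModule x := by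
  ext i
  simp only [mulVecModule, mul_apply, Finset.sum_smul, Finset.smul_sum, mul_smul]
  exact Finset.sum_comm

theorem one_mulVecModule [Semiring R] [AddCommMonoid A] [Module R A] [DecidableEq n]
    (x : n → A) : (1 : Matrix n n R).mulVecModule x = x := by
  ext i
  simp [mulVecModule, one_apply, ite_smul]

theorem bijective_mulVecModule [CommRing R] [AddCommMonoid A] [Module R A] [DecidableEq n]
    {M : Matrix n n R} (hM : IsUnit M.det) :
    Function.Bijective (M.mulVecModule : (n → A) → n → A) := by
  refine Function.bijective_iff_has_inverse.2 ⟨M⁻¹.mulVecModule, fun x => ?_, fun x => ?_⟩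
  · rw [mulVecModule_mulVecModule, nonsing_inv_mul _ hM, one_mulVecModule]
  · rw [mulVecModule_mulVecModule, mul_nonsing_inv _ hM, one_mulVecModule]

end Matrix

theorem unimodular_matrix_maps_kernel_to_torsion_general
    {l : ℕ} (hl : 1 ≤ l) (v v' : Fin l → ℤ)
    (d : ℤ) (hd : 0 < d) (hgcd : Finset.univ.gcd v = d)
    (hvv' : v = d • v') :
    ∃ M : Matrix (Fin l) (Fin l) ℤ,
      IsUnit M.det ∧ M ⟨0, hl⟩ = v' ∧
      ∀ (A : Type u) [AddCommGroup A],
        Set.BijOn (fun (x : Fin l → A) (i : Fin l) => ∑ j, M i j • x j)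
          {x : Fin l → A | ∑ i, v i • x i = 0}
          {y : Fin l → A | d • y ⟨0, hl⟩ = 0} := by
  obtain ⟨n, rfl⟩ : ∃ n, l = n + 1 := ⟨l - 1, by omega⟩
  have hprimitive : Finset.univ.gcd v' = 1 := by
    have h : normalize d * Finset.univ.gcd v' = d * 1 := by
      rw [mul_one, ← Finset.gcd_mul_left]
      subst hvv'
      exact hgcd
    rw [Int.normalize_of_nonneg hd.le] at h
    exact mul_left_cancel₀ hd.ne' h
  obtain ⟨M, hdet, hrow⟩ := Matrix.exists_isUnit_det_and_apply_zero_eq v'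
    (Ideal.span_range_eq_top_of_gcd_eq_one v' hprimitive)
  refine ⟨M, hdet, hrow, fun A _ => ?_⟩
  have hkernel : {x : Fin (n + 1) → A | ∑ i, v i • x i = 0} =
      M.mulVecModule ⁻¹' {y | d • y 0 = 0} := by
    ext x
    simp [Matrix.mulVecModule, hrow, hvv', Finset.smul_sum, mul_smul]
  rw [hkernel]
  exact (Matrix.bijective_mulVecModule hdet).bijOn_preimage

/-- Let `v : Fin l → ℤ` be nonzero with gcd `d > 0` of its entries and
`v = d • v'` with `v'` primitive. Then there is an integer matrix `M` invertible over `ℤ`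
(unit determinant) with first row `v'`, such that for every abelian group `A` the induced
automorphism `x ↦ (∑ j, M i j • x j)_i` of `Fin l → A` maps the subgroup
`{x | ∑ i, v i • x i = 0}` bijectively onto `{y | d • y 0 = 0}`. -/
theorem unimodular_matrix_maps_kernel_to_torsion
    {l : ℕ} (hl : 1 ≤ l) (v v' : Fin l → ℤ) (hv : v ≠ 0)
    (d : ℤ) (hd : 0 < d) (hgcd : Finset.univ.gcd v = d)
    (hvv' : v = d • v') :
    ∃ M : Matrix (Fin l) (Fin l) ℤ,
      IsUnit M.det ∧ M ⟨0, hl⟩ = v' ∧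
      ∀ (A : Type u) [AddCommGroup A],
        Set.BijOn (fun (x : Fin l → A) (i : Fin l) => ∑ j, M i j • x j)
          {x : Fin l → A | ∑ i, v i • x i = 0}
          {y : Fin l → A | d • y ⟨0, hl⟩ = 0} :=
  unimodular_matrix_maps_kernel_to_torsion_general hl v v' d hd hgcd hvv'
end

section
/- Let A be a divisible additive abelian group, let l ≥ 1, and let v : Fin l → ℤ be a vector with all entries positive, d = gcd of its entries, and v' = v/d; set m = ∑_i v'_i. Fix σ ∈ A with d • σ = 0. Let Ã_σ = {x : Fin l → A ∣ ∑_i v'_i • x_i = σ}. Define Σ_σ : Ã_σ × A → (Fin l → A) by Σ_σ(x, a) = (x_1 + a, …, x_l + a). Then Σ_σ is surjective, and for every y : Fin l → A the fiber Σ_σ^{−1}(y) is in bijection with the m-torsion subgroup A[m] = {b ∈ A : m • b = 0}. -/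
/-- The shift map `Σ_σ : Ã^ν_σ × A → A^ν`, `((x_i), a) ↦ (x_i + a)`, where
`Ã^ν_σ = {x : Fin l → A | ∑ i, v' i • x i = σ}`. -/
def shiftMapSigma {A : Type*} [AddCommGroup A] {l : ℕ} (v' : Fin l → ℤ) (σ : A) :
    {x : Fin l → A // ∑ i, v' i • x i = σ} × A → (Fin l → A) :=
  fun p i => p.1.1 i + p.2

/-- Let `A` be a divisible abelian group, `l ≥ 1`, and `v : Fin l → ℤ`
with all entries positive, gcd `d > 0`, and `v = d • v'`; set `m = ∑ i, v' i`. Fix `σ ∈ A`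
with `d • σ = 0`, put `Ã_σ = {x | ∑ i, v' i • x i = σ}`, and let
`Σ_σ : Ã_σ × A → (Fin l → A)` be the shift map `(x, a) ↦ (x_1 + a, …, x_l + a)`. Then
`Σ_σ` is surjective and every fiber `Σ_σ⁻¹(y)` is in bijection with the `m`-torsion
subgroup `A[m] = {b : A // m • b = 0}`. -/
theorem shiftMapSigma_surjective_and_fibers_torsion
    {A : Type*} [AddCommGroup A]
    (hdiv : ∀ k : ℤ, k ≠ 0 → ∀ a : A, ∃ b : A, k • b = a)
    {l : ℕ} (hl : 1 ≤ l) (v v' : Fin l → ℤ) (hv : ∀ i, 0 < v i)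
    (d : ℤ) (hd : 0 < d) (hgcd : Finset.univ.gcd v = d) (hvv' : v = d • v')
    (m : ℤ) (hm : m = ∑ i, v' i)
    (σ : A) (hσ : d • σ = 0) :
    Function.Surjective (shiftMapSigma (A := A) v' σ) ∧
      ∀ y : Fin l → A,
        Nonempty ((shiftMapSigma (A := A) v' σ ⁻¹' {y}) ≃ {b : A // m • b = 0}) := by
  have hv' : ∀ i, 0 < v' i := by
    intro i
    have h1 : v i = d * v' i := by rw [hvv']; simp
    nlinarith [hv i]
  have hmpos : 0 < m := by
    rw [hm]
    have : (Finset.univ : Finset (Fin l)).Nonempty :=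
      Finset.univ_nonempty_iff.mpr (Fin.pos_iff_nonempty.mp hl)
    exact Finset.sum_pos (fun i _ => hv' i) this
  have hmne : m ≠ 0 := hmpos.ne'
  have key : ∀ (y : Fin l → A) (a : A),
      (∑ i, v' i • (y i - a)) = (∑ i, v' i • y i) - m • a := by
    intro y a
    simp only [smul_sub, Finset.sum_sub_distrib, ← Finset.sum_smul, hm]
  constructor
  · intro y
    obtain ⟨a, ha⟩ := hdiv m hmne ((∑ i, v' i • y i) - σ)
    refine ⟨⟨⟨fun i => y i - a, ?_⟩, a⟩, ?_⟩
    · rw [key, ha]; abel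
    · funext i; simp [shiftMapSigma]
  · intro y
    obtain ⟨a₀, ha₀⟩ := hdiv m hmne ((∑ i, v' i • y i) - σ)
    refine ⟨⟨fun p => ⟨p.1.2 - a₀, ?_⟩,
      fun b => ⟨⟨⟨fun i => y i - (a₀ + b.1), ?_⟩, a₀ + b.1⟩, ?_⟩, ?_, ?_⟩⟩
    · obtain ⟨⟨⟨x, hx⟩, a⟩, hp⟩ := p
      have hp' : shiftMapSigma (A := A) v' σ (⟨⟨x, hx⟩, a⟩) = y := hp
      have hxy : ∀ i, x i = y i - a := by
        intro i
        have := congrFun hp' i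
        simp only [shiftMapSigma] at this
        rw [← this]; abel
      have hsum : (∑ i, v' i • (y i - a)) = σ := by
        rw [← hx]; exact (Finset.sum_congr rfl (fun i _ => by rw [hxy i])).symm
      rw [key] at hsum
      have hma : m • a = (∑ i, v' i • y i) - σ := by
        rw [sub_eq_iff_eq_add'] at hsum
        rw [hsum]; abel
      simp only [smul_sub, hma, ha₀, sub_self]
    · rw [key, smul_add, ha₀, b.2]; abel
    · show shiftMapSigma (A := A) v' σ _ = y
      funext i; simp [shiftMapSigma]
    · rintro ⟨⟨⟨x, hx⟩, a⟩, hp⟩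
      have hp' : shiftMapSigma (A := A) v' σ (⟨⟨x, hx⟩, a⟩) = y := hp
      have hxy : ∀ i, x i = y i - a := by
        intro i
        have := congrFun hp' i
        simp only [shiftMapSigma] at this
        rw [← this]; abel
      apply Subtype.ext
      simp only
      refine Prod.ext (Subtype.ext ?_) (by simp)
      funext i
      simp only [hxy i]
      abel
    · rintro ⟨b, hb⟩
      apply Subtype.ext
      simp only
      abel
end
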